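/- For the ISTA iterates on the ℓ1-regularized PageRank objective, the support of every iterate is contained in the support of the optimal solution: supp(q_k) ⊆ supp(q*) for all k, where q* is the unique minimizer of ψ. -/

import Mathlib

/-!
The ISTA map `x ↦ prox(x - ∇f x)` is order preserving: soft thresholding is monotone, and
`x - ∇f x = (1 - Q) x + α D^{-1/2} s` where `1 - Q = ((1 - α)/2) (1 + D^{-1/2} A D^{-1/2})` has
nonnegative entries. Since `q₀ = 0 ≤ q₁`, the iterates increase, so every `q_k` is nonnegative
and below its limit `q*`; hence `q_k i ≠ 0` forces `0 < q_k i ≤ q* i`.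
-/

open Matrix

namespace Matrix

variable {ι R : Type*}

theorem mulVec_monotone_of_nonneg [Fintype ι] [Semiring R] [PartialOrder R] [IsOrderedRing R]
    {M : Matrix ι ι R} (hM : ∀ i j, 0 ≤ M i j) : Monotone (M *ᵥ ·) :=
  fun _ _ hxy i => Finset.sum_le_sum fun j _ => mul_le_mul_of_nonneg_left (hxy j) (hM i j)

theorem diagonal_mul_mul_diagonal_apply_nonneg [Fintype ι] [DecidableEq ι] {w : ι → ℝ}
    {A : Matrix ι ι ℝ} (hw : ∀ i, 0 ≤ w i) (hA : ∀ i j, 0 ≤ A i j) (i j : ι) :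
    0 ≤ (diagonal w * A * diagonal w) i j := by
  rw [mul_diagonal, diagonal_mul]
  exact mul_nonneg (mul_nonneg (hw i) (hA i j)) (hw j)

theorem one_sub_smul_one_add_smul_one_sub_apply_nonneg [DecidableEq ι] {α : ℝ} (hα : α ≤ 1)
    {M : Matrix ι ι ℝ} (hM : ∀ i j, 0 ≤ M i j) (i j : ι) :
    0 ≤ (1 - (α • (1 : Matrix ι ι ℝ) + ((1 - α) / 2) • (1 - M))) i j := by
  have hsplit : 1 - (α • (1 : Matrix ι ι ℝ) + ((1 - α) / 2) • (1 - M)) =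
      ((1 - α) / 2) • (1 + M) := by
    module
  rw [hsplit, smul_apply, add_apply, smul_eq_mul]
  have hone : (0 : ℝ) ≤ (1 : Matrix ι ι ℝ) i j := by
    rw [one_apply]; positivity
  exact mul_nonneg (by linarith) (add_nonneg hone (hM i j))

end Matrix

theorem monotone_sub_mulVec_sub {ι : Type*} [Fintype ι] [DecidableEq ι] {Q : Matrix ι ι ℝ}
    (hQ : ∀ i j, 0 ≤ (1 - Q) i j) (b : ι → ℝ) : Monotone fun x => x - (Q *ᵥ x - b) := by
  have hform : (fun x => x - (Q *ᵥ x - b)) = fun x => (1 - Q) *ᵥ x + b := by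
    funext x
    rw [sub_mulVec, one_mulVec]
    abel
  rw [hform]
  exact fun x y hxy => add_le_add_left (mulVec_monotone_of_nonneg hQ hxy) b

noncomputable def softThreshold (t x : ℝ) : ℝ :=
  if t ≤ x then x - t else if x ≤ -t then x + t else 0

theorem softThreshold_monotone (t : ℝ) : Monotone (softThreshold t) := by
  intro x y hxy
  unfold softThreshold
  split_ifs <;> linarith

theorem softThreshold_nonneg (t : ℝ) {x : ℝ} (hx : 0 ≤ x) : 0 ≤ softThreshold t x := by
  unfold softThreshold
  split_ifs <;> linarith

theorem monotone_of_succ_eq_map {α : Type*} [Preorder α] {T : α → α} (hT : Monotone T)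
    {q : ℕ → α} (hq : ∀ k, q (k + 1) = T (q k)) (h01 : q 0 ≤ q 1) : Monotone q := by
  have hiter : q = fun k => T^[k] (q 0) := by
    funext k
    induction k with
    | zero => rfl
    | succ k ih => rw [hq, ih, Function.iterate_succ_apply']
  exact hiter ▸ hT.monotone_iterate_of_le_map (hq 0 ▸ h01)

theorem ista_support_subset_optimal_support_general {n : ℕ}
    (A : Matrix (Fin n) (Fin n) ℝ)
    (hAnn : ∀ i j, 0 ≤ A i j)
    (d : Fin n → ℝ)
    (α : ℝ) (hα : α ∈ Set.Ioo (0 : ℝ) 1) (ρ : ℝ)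
    (s : Fin n → ℝ) (hs : ∀ i, 0 ≤ s i)
    (Dinvhalf : Matrix (Fin n) (Fin n) ℝ)
    (hDinvhalf : Dinvhalf = Matrix.diagonal fun i => (Real.sqrt (d i))⁻¹)
    (Q : Matrix (Fin n) (Fin n) ℝ)
    (hQ : Q = α • (1 : Matrix (Fin n) (Fin n) ℝ) +
      ((1 - α) / 2) • ((1 : Matrix (Fin n) (Fin n) ℝ) - Dinvhalf * A * Dinvhalf))
    (g : (Fin n → ℝ) → (Fin n → ℝ))
    (hg : ∀ q, g q = Q.mulVec q - α • Dinvhalf.mulVec s)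
    (q : ℕ → Fin n → ℝ) (hq0 : q 0 = 0)
    (hupd : ∀ k i, q (k + 1) i =
      if ρ * α * Real.sqrt (d i) ≤ q k i - g (q k) i then
        q k i - g (q k) i - ρ * α * Real.sqrt (d i)
      else if q k i - g (q k) i ≤ -(ρ * α * Real.sqrt (d i)) then
        q k i - g (q k) i + ρ * α * Real.sqrt (d i)
      else 0)
    (qstar : Fin n → ℝ)
    (hconv : Filter.Tendsto q Filter.atTop (nhds qstar)) :
    ∀ k, {i : Fin n | q k i ≠ 0} ⊆ {i : Fin n | qstar i ≠ 0} := by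
  have hgrad : Monotone fun x => x - g x := by
    have hQnn : ∀ i j, 0 ≤ (1 - Q) i j := by
      rw [hQ, hDinvhalf]
      exact one_sub_smul_one_add_smul_one_sub_apply_nonneg hα.2.le
        (diagonal_mul_mul_diagonal_apply_nonneg (fun i => by positivity) hAnn)
    simpa only [← hg] using monotone_sub_mulVec_sub hQnn (α • Dinvhalf *ᵥ s)
  set T : (Fin n → ℝ) → Fin n → ℝ :=
    fun x i => softThreshold (ρ * α * Real.sqrt (d i)) (x i - g x i)
  have hstep : ∀ k, q (k + 1) = T (q k) := fun k => funext (hupd k)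
  have hT : Monotone T := fun x y hxy i => softThreshold_monotone _ (hgrad hxy i)
  have hq01 : q 0 ≤ q 1 := by
    intro i
    rw [hstep, hq0, Pi.zero_apply]
    refine softThreshold_nonneg _ ?_
    simp only [hg, hDinvhalf, Pi.zero_apply, mulVec_zero, zero_sub, Pi.sub_apply,
      Pi.smul_apply, mulVec_diagonal, smul_eq_mul, neg_neg]
    have := hs i
    have := hα.1
    positivity
  have hqmono := monotone_of_succ_eq_map hT hstep hq01
  intro k i hi
  have hnonneg : 0 ≤ q k i := by simpa [hq0] using hqmono (Nat.zero_le k) i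
  have hpos : 0 < q k i := hnonneg.lt_of_ne' hi
  exact (hpos.trans_le (hqmono.ge_of_tendsto hconv k i)).ne'

/-- For the ISTA iterates on the ℓ1-regularized PageRank objective (with `q_0 = 0`,
`s ≥ 0`, `‖s‖_∞ ≥ ρ`, converging to the unique minimizer `q*` of `ψ`), the support of
every iterate is contained in the support of the optimal solution:
`supp(q_k) ⊆ supp(q*)` for all `k`. -/
theorem ista_support_subset_optimal_support {n : ℕ}
    (A : Matrix (Fin n) (Fin n) ℝ) (hA : A.IsSymm)
    (hAnn : ∀ i j, 0 ≤ A i j) (hAdiag : ∀ i, A i i = 0)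
    (d : Fin n → ℝ) (hd : ∀ i, d i = ∑ j, A i j) (hdpos : ∀ i, 0 < d i)
    (α : ℝ) (hα : α ∈ Set.Ioo (0 : ℝ) 1) (ρ : ℝ) (hρ : 0 < ρ)
    (s : Fin n → ℝ) (hs : ∀ i, 0 ≤ s i) (hs1 : ∑ i, s i = 1)
    (hsρ : ∃ i, ρ ≤ |s i|)
    (Dinvhalf : Matrix (Fin n) (Fin n) ℝ)
    (hDinvhalf : Dinvhalf = Matrix.diagonal fun i => (Real.sqrt (d i))⁻¹)
    (Q : Matrix (Fin n) (Fin n) ℝ)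
    (hQ : Q = α • (1 : Matrix (Fin n) (Fin n) ℝ) +
      ((1 - α) / 2) • ((1 : Matrix (Fin n) (Fin n) ℝ) - Dinvhalf * A * Dinvhalf))
    (g : (Fin n → ℝ) → (Fin n → ℝ))
    (hg : ∀ q, g q = Q.mulVec q - α • Dinvhalf.mulVec s)
    (f : (Fin n → ℝ) → ℝ)
    (hf : ∀ q, f q = (1 / 2) * (q ⬝ᵥ Q.mulVec q) - α * (s ⬝ᵥ Dinvhalf.mulVec q))
    (ψ : (Fin n → ℝ) → ℝ)
    (hψ : ∀ q, ψ q = ρ * α * ∑ i, Real.sqrt (d i) * |q i| + f q)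
    (q : ℕ → Fin n → ℝ) (hq0 : q 0 = 0)
    (hupd : ∀ k i, q (k + 1) i =
      if ρ * α * Real.sqrt (d i) ≤ q k i - g (q k) i then
        q k i - g (q k) i - ρ * α * Real.sqrt (d i)
      else if q k i - g (q k) i ≤ -(ρ * α * Real.sqrt (d i)) then
        q k i - g (q k) i + ρ * α * Real.sqrt (d i)
      else 0)
    (qstar : Fin n → ℝ)
    (hmin : ∀ p, ψ qstar ≤ ψ p)
    (hconv : Filter.Tendsto q Filter.atTop (nhds qstar)) :
    ∀ k, {i : Fin n | q k i ≠ 0} ⊆ {i : Fin n | qstar i ≠ 0} :=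
  ista_support_subset_optimal_support_general A hAnn d α hα ρ s hs Dinvhalf hDinvhalf Q hQ g hg q
    hq0 hupd qstar hconv
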